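/- arXiv:math/0611934 — 2 statements merged into one kernel-verified Lean document; each statement's English description precedes it below -/
import Mathlib

section
/- Let C : ℤ^d × ℤ^d → [0,∞) satisfy (A2) and (A3) with constants κ₁, κ₂, N₀. Then there exist γ ∈ (0,1), Θ₁ > 0 and κ₃ > 0, depending only on κ₁, κ₂, N₀, d and α, such that for all x ∈ ℤ^d and all r > Θ₁, the number of y ∈ ℤ^d with |y−x| ≤ r and C(x,y) ≥ κ₃|x−y|^{−d−α} is at least γ times the number of y ∈ ℤ^d with |y−x| ≤ r. -/
/-- Euclidean norm of a point of `ℤ^d`. -/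
noncomputable def zNorm (d : ℕ) (v : Fin d → ℤ) : ℝ := Real.sqrt (∑ i, ((v i : ℝ))^2)

/-!
Fix `x`, write `β = d + α` and `λ = (κ₁/κ₂)^(1/β)`, and let `y ≠ x` range over the ball of radius
`ρ r`. The first edge `(x, w)` of the chain from `x` to `y` has `C x w ≥ κ₂ |x - y|^(-β)`, so (A2)
gives `|w - x| ≤ λ |x - y|`, which is at most `r` when `λ ρ ≤ 1`. Since `(x, w)` is the first edge of
at most `N₀` chains, `y ↦ w` is at most `N₀`-to-one. Hence at most `N₀ · #B(x, δ r)` of the `y` have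
`w` in the small ball `B(x, δ r)`, and for all others `|x - y| ≤ ρ r < (ρ/δ) |x - w|`, so that
`C x w ≥ κ₂ (ρ/δ)^(-β) |x - w|^(-β)`. Counting lattice points, `#B(x, ρ r) ≳ (ρ r / √d)^d`
beats `N₀ · #B(x, δ r)` once `δ` is small, while `#B(x, r) ≤ (3 r)^d`.
-/

open Finset

lemma zNorm_sub_comm {d : ℕ} (x y : Fin d → ℤ) : zNorm d (x - y) = zNorm d (y - x) := by
  simp only [zNorm, Pi.sub_apply, Int.cast_sub]
  congr 1
  exact sum_congr rfl fun i _ => by ring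

lemma abs_le_zNorm {d : ℕ} (v : Fin d → ℤ) (i : Fin d) : |(v i : ℝ)| ≤ zNorm d v := by
  rw [← Real.sqrt_sq_eq_abs]
  exact Real.sqrt_le_sqrt (single_le_sum (fun j _ => sq_nonneg (v j : ℝ)) (mem_univ i))

lemma zNorm_pos {d : ℕ} {v : Fin d → ℤ} (hv : v ≠ 0) : 0 < zNorm d v := by
  obtain ⟨i, hi⟩ := Function.ne_iff.1 hv
  exact (abs_pos.2 (Int.cast_ne_zero.2 hi)).trans_le (abs_le_zNorm v i)

lemma zNorm_le_sqrt_mul {d : ℕ} {v : Fin d → ℤ} {m : ℝ} (hm : 0 ≤ m)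
    (h : ∀ i, |(v i : ℝ)| ≤ m) : zNorm d v ≤ √d * m := by
  calc zNorm d v ≤ √(∑ _i : Fin d, m ^ 2) :=
        Real.sqrt_le_sqrt (sum_le_sum fun i _ => sq_le_sq' (abs_le.1 (h i)).1 (abs_le.1 (h i)).2)
    _ = √d * m := by simp [Real.sqrt_mul, Real.sqrt_sq hm]

noncomputable def zBox (d : ℕ) (x : Fin d → ℤ) (m : ℕ) : Finset (Fin d → ℤ) :=
  Fintype.piFinset fun i => Icc (x i - m) (x i + m)

lemma mem_zBox {d m : ℕ} {x y : Fin d → ℤ} : y ∈ zBox d x m ↔ ∀ i, |y i - x i| ≤ m := by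
  simp only [zBox, Fintype.mem_piFinset, mem_Icc, abs_le]
  exact forall_congr' fun i => by omega

lemma card_zBox (d m : ℕ) (x : Fin d → ℤ) : (zBox d x m).card = (2 * m + 1) ^ d := by
  rw [zBox, Fintype.card_piFinset]
  simp only [Int.card_Icc, show ∀ a : ℤ, a + m + 1 - (a - m) = (2 * m + 1 : ℕ) by omega,
    Int.toNat_natCast, prod_const, card_univ, Fintype.card_fin]

noncomputable def zBall (d : ℕ) (x : Fin d → ℤ) (R : ℝ) : Finset (Fin d → ℤ) :=
  (zBox d x ⌊R⌋₊).filter fun y => zNorm d (y - x) ≤ R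

lemma mem_zBall {d : ℕ} {x y : Fin d → ℤ} {R : ℝ} : y ∈ zBall d x R ↔ zNorm d (y - x) ≤ R := by
  refine ⟨fun h => (mem_filter.1 h).2, fun h => mem_filter.2 ⟨mem_zBox.2 fun i => ?_, h⟩⟩
  have hR : 0 ≤ R := (Real.sqrt_nonneg _).trans h
  have hi : |((y i - x i : ℤ) : ℝ)| ≤ R := by simpa using (abs_le_zNorm (y - x) i).trans h
  rw [Int.natCast_floor_eq_floor hR]
  exact Int.le_floor.2 (by rwa [Int.cast_abs])

lemma coe_zBall (d : ℕ) (x : Fin d → ℤ) (R : ℝ) :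
    (zBall d x R : Set (Fin d → ℤ)) = {y | zNorm d (y - x) ≤ R} := by
  ext; simp [mem_zBall]

lemma card_zBall_le {d : ℕ} (x : Fin d → ℤ) {R : ℝ} (hR : 0 ≤ R) :
    ((zBall d x R).card : ℝ) ≤ (2 * R + 1) ^ d :=
  calc ((zBall d x R).card : ℝ) ≤ (zBox d x ⌊R⌋₊).card := by exact_mod_cast card_filter_le _ _
    _ = (2 * ⌊R⌋₊ + 1 : ℝ) ^ d := by rw [card_zBox]; push_cast; rfl
    _ ≤ (2 * R + 1) ^ d := by gcongr; exact Nat.floor_le hR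

lemma zBox_subset_zBall {d m : ℕ} (x : Fin d → ℤ) {R : ℝ} (h : √d * m ≤ R) :
    zBox d x m ⊆ zBall d x R := fun y hy =>
  mem_zBall.2 <| (zNorm_le_sqrt_mul m.cast_nonneg fun i => by
    simpa using (Int.cast_le (R := ℝ)).2 (mem_zBox.1 hy i)).trans h

lemma le_card_zBall {d : ℕ} (x : Fin d → ℤ) {R : ℝ} (hR : 0 ≤ R) :
    (R / √d) ^ d ≤ (zBall d x R).card := by
  set m := ⌊R / √d⌋₊
  have hm : √d * m ≤ R := by
    rcases (Real.sqrt_nonneg (d : ℝ)).eq_or_lt with h | h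
    · simpa [← h] using hR
    · calc √d * m ≤ √d * (R / √d) := by gcongr; exact Nat.floor_le (by positivity)
        _ = R := mul_div_cancel₀ R h.ne'
  calc (R / √d) ^ d ≤ (2 * m + 1 : ℝ) ^ d := by
        gcongr
        linarith [Nat.lt_floor_add_one (R / √d), m.cast_nonneg (α := ℝ)]
    _ = (zBox d x m).card := by rw [card_zBox]; push_cast; rfl
    _ ≤ (zBall d x R).card := by exact_mod_cast card_le_card (zBox_subset_zBall x hm)

lemma le_rpow_inv_mul_of_mul_rpow_neg_le {a b β κ₁ κ₂ : ℝ} (ha : 0 < a) (hb : 0 < b)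
    (hβ : 0 < β) (hκ₁ : 0 < κ₁) (hκ₂ : 0 < κ₂) (h : κ₂ * a ^ (-β) ≤ κ₁ * b ^ (-β)) :
    b ≤ (κ₁ / κ₂) ^ β⁻¹ * a := by
  have hpow : b ^ β ≤ κ₁ / κ₂ * a ^ β := by
    rw [Real.rpow_neg ha.le, Real.rpow_neg hb.le, ← div_eq_mul_inv, ← div_eq_mul_inv,
      div_le_div_iff₀ (by positivity) (by positivity)] at h
    rw [div_mul_eq_mul_div, le_div_iff₀ hκ₂]
    linarith
  calc b = (b ^ β) ^ β⁻¹ := (Real.rpow_rpow_inv hb.le hβ.ne').symm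
    _ ≤ (κ₁ / κ₂ * a ^ β) ^ β⁻¹ := by gcongr
    _ = (κ₁ / κ₂) ^ β⁻¹ * a := by
      rw [Real.mul_rpow (by positivity) (by positivity), Real.rpow_rpow_inv ha.le hβ.ne']

lemma mul_rpow_neg_le_of_le_mul {a b c β κ : ℝ} (ha : 0 < a) (hb : 0 < b) (hc : 0 < c)
    (hβ : 0 ≤ β) (hκ : 0 ≤ κ) (hab : a ≤ c * b) : κ * c ^ (-β) * b ^ (-β) ≤ κ * a ^ (-β) := by
  rw [mul_assoc, ← Real.mul_rpow hc.le hb.le]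
  exact mul_le_mul_of_nonneg_left (Real.rpow_le_rpow_of_nonpos ha hab (by linarith)) hκ

lemma card_le_mul_card_add_card_of_mapsTo {α β : Type*} [DecidableEq β] {f : α → β}
    {s : Finset α} {t u : Finset β} {n : ℕ} (hf : ∀ a ∈ s, f a ∈ t ∪ u)
    (hn : ∀ b, (s.filter fun a => f a = b).card ≤ n) : s.card ≤ n * (t.card + u.card) :=
  (card_le_mul_card_image_of_maps_to hf n fun b _ => hn b).trans
    (Nat.mul_le_mul_left n (card_union_le t u))

section Chains

variable {d N₀ : ℕ} {β κ₂ : ℝ} {C : (Fin d → ℤ) → (Fin d → ℤ) → ℝ}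
  {l : (Fin d → ℤ) → (Fin d → ℤ) → ℕ} {z : (Fin d → ℤ) → (Fin d → ℤ) → ℕ → (Fin d → ℤ)}
  {x y : Fin d → ℤ}

lemma chain_length_pos (hxy : x ≠ y) (h₀ : z x y 0 = x) (hl : z x y (l x y) = y) :
    0 < l x y :=
  Nat.pos_of_ne_zero fun h => hxy (h₀.symm.trans (by rwa [h] at hl))

lemma le_conductance_chain_first_step (hxy : x ≠ y) (h₀ : z x y 0 = x)
    (hl : z x y (l x y) = y)
    (hstep : ∀ i < l x y, κ₂ * zNorm d (x - y) ^ (-β) ≤ C (z x y i) (z x y (i + 1))) :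
    κ₂ * zNorm d (x - y) ^ (-β) ≤ C x (z x y 1) := by
  simpa [h₀] using hstep 0 (chain_length_pos hxy h₀ hl)

lemma card_filter_chain_first_step_eq_le (hz : ∀ y, x ≠ y → z x y 0 = x ∧ z x y (l x y) = y)
    (ξ : Fin d → ℤ)
    (hfin : {p : (Fin d → ℤ) × (Fin d → ℤ) | p.1 ≠ p.2 ∧
      ∃ k < l p.1 p.2, z p.1 p.2 k = x ∧ z p.1 p.2 (k + 1) = ξ}.Finite)
    (hcard : {p : (Fin d → ℤ) × (Fin d → ℤ) | p.1 ≠ p.2 ∧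
      ∃ k < l p.1 p.2, z p.1 p.2 k = x ∧ z p.1 p.2 (k + 1) = ξ}.ncard ≤ N₀)
    (s : Finset (Fin d → ℤ)) (hs : x ∉ s) :
    (s.filter fun y => z x y 1 = ξ).card ≤ N₀ := by
  refine le_trans ?_ hcard
  rw [← card_map ⟨_, Prod.mk_right_injective x⟩, ← Set.ncard_coe_finset]
  refine Set.ncard_le_ncard ?_ hfin
  intro p hp
  simp only [coe_map, Function.Embedding.coeFn_mk, Set.mem_image, mem_coe, mem_filter] at hp
  obtain ⟨y, ⟨hys, hξ⟩, rfl⟩ := hp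
  have hxy : x ≠ y := fun h => hs (h ▸ hys)
  exact ⟨hxy, 0, chain_length_pos hxy (hz y hxy).1 (hz y hxy).2, (hz y hxy).1, hξ⟩

end Chains

noncomputable def strongNeighbours (d : ℕ) (C : (Fin d → ℤ) → (Fin d → ℤ) → ℝ) (κ β : ℝ)
    (x : Fin d → ℤ) (r : ℝ) : Finset (Fin d → ℤ) :=
  (zBall d x r).filter fun w => κ * zNorm d (x - w) ^ (-β) ≤ C x w

lemma coe_strongNeighbours (d : ℕ) (C : (Fin d → ℤ) → (Fin d → ℤ) → ℝ) (κ β : ℝ)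
    (x : Fin d → ℤ) (r : ℝ) : (strongNeighbours d C κ β x r : Set (Fin d → ℤ)) =
      {w | zNorm d (w - x) ≤ r ∧ κ * zNorm d (x - w) ^ (-β) ≤ C x w} := by
  ext; simp [strongNeighbours, mem_zBall]

/-- `A`, `U` and `B` stand for the sizes of the punctured ball of radius `√d c r`, of the ball of
radius `c r / (12 N)` and of the ball of radius `r`; that radius makes `N U ≤ (c r)^d / 4`. -/
lemma le_of_lattice_counts {d N : ℕ} (hd : 1 ≤ d) (hN : 0 < N) {c r A U T B : ℝ} (hc : 0 < c)
    (hc1 : c ≤ 1) (hr : 12 * N / c < r) (hA : (c * r) ^ d ≤ A + 1)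
    (hU : U ≤ (2 * (c / (12 * N) * r) + 1) ^ d) (hB : B ≤ (2 * r + 1) ^ d)
    (hAUT : A ≤ N * (U + T)) : (c / 3) ^ d / (4 * N) * B ≤ T := by
  have hN : (1 : ℝ) ≤ N := by exact_mod_cast hN
  set s := c * r
  have hs : 12 * N < s := by rw [div_lt_iff₀ hc] at hr; linarith
  have hr1 : 1 ≤ r := by linarith [le_div_self (by positivity : (0:ℝ) ≤ 12 * N) hc hc1]
  have hsd : 2 ≤ s ^ d := by
    have : s ≤ s ^ d := le_self_pow₀ (by linarith) (by omega)
    linarith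
  have hB' : (c / 3) ^ d / (4 * N) * B ≤ s ^ d / (4 * N) := by
    calc (c / 3) ^ d / (4 * N) * B ≤ (c / 3) ^ d / (4 * N) * (3 * r) ^ d := by
          gcongr
          exact hB.trans (by gcongr; linarith)
      _ = s ^ d / (4 * N) := by
          rw [div_mul_eq_mul_div, ← mul_pow, show c / 3 * (3 * r) = s by ring]
  have hU' : N * U ≤ s ^ d / 4 := by
    calc N * U ≤ N * (s / (4 * N)) ^ d := by
          gcongr
          refine hU.trans (pow_le_pow_left₀ (by positivity) ?_ d)
          have : 1 ≤ c / (12 * N) * r := by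
            rw [div_mul_eq_mul_div, le_div_iff₀ (by positivity)]; linarith
          field_simp
          linarith
      _ = N * s ^ d / (4 * N) ^ d := by rw [div_pow]; ring
      _ ≤ N * s ^ d / (4 * N) := by
          gcongr
          exact le_self_pow₀ (by linarith) (by omega)
      _ = s ^ d / 4 := by field_simp
  calc (c / 3) ^ d / (4 * N) * B ≤ s ^ d / (4 * N) := hB'
    _ ≤ T := by rw [div_le_iff₀ (by positivity)]; linarith

section FirstStep

variable {d N : ℕ} {β κ₁ κ₂ ρ δ r : ℝ} {C : (Fin d → ℤ) → (Fin d → ℤ) → ℝ}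
  {x : Fin d → ℤ} {φ : (Fin d → ℤ) → (Fin d → ℤ)}

lemma mem_strongNeighbours_of_notMem_zBall (hβ : 0 < β) (hκ₁ : 0 < κ₁) (hκ₂ : 0 < κ₂)
    (hC : ∀ w, x ≠ w → C x w ≤ κ₁ * zNorm d (x - w) ^ (-β))
    (hφ : ∀ y, x ≠ y → κ₂ * zNorm d (x - y) ^ (-β) ≤ C x (φ y))
    (hρ : 0 < ρ) (hρκ : (κ₁ / κ₂) ^ β⁻¹ * ρ ≤ 1) (hδ : 0 < δ) {y : Fin d → ℤ}
    (hy : y ∈ (zBall d x (ρ * r)).erase x) (hφy : φ y ∉ zBall d x (δ * r)) :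
    φ y ∈ strongNeighbours d C (κ₂ * (ρ / δ) ^ (-β)) β x r := by
  obtain ⟨hyx, hy⟩ := mem_erase.1 hy
  rw [mem_zBall, zNorm_sub_comm] at hy
  rw [mem_zBall, not_le, zNorm_sub_comm] at hφy
  have ha : 0 < zNorm d (x - y) := zNorm_pos (sub_ne_zero.2 hyx.symm)
  have hr : 0 ≤ r := nonneg_of_mul_nonneg_right (ha.le.trans hy) hρ
  have hb : 0 < zNorm d (x - φ y) := (by positivity : 0 ≤ δ * r).trans_lt hφy
  have hxφ : x ≠ φ y := fun h => by simp [← h, zNorm] at hb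
  have hC' := (hφ y hyx.symm).trans (hC (φ y) hxφ)
  refine mem_filter.2 ⟨mem_zBall.2 ?_, ?_⟩
  · calc zNorm d (φ y - x) = zNorm d (x - φ y) := zNorm_sub_comm _ _
      _ ≤ (κ₁ / κ₂) ^ β⁻¹ * zNorm d (x - y) :=
        le_rpow_inv_mul_of_mul_rpow_neg_le ha hb hβ hκ₁ hκ₂ hC'
      _ ≤ (κ₁ / κ₂) ^ β⁻¹ * (ρ * r) := by gcongr
      _ = (κ₁ / κ₂) ^ β⁻¹ * ρ * r := by ring
      _ ≤ r := mul_le_of_le_one_left hr hρκ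
  · refine (mul_rpow_neg_le_of_le_mul ha hb (div_pos hρ hδ) hβ.le hκ₂.le ?_).trans (hφ y hyx.symm)
    calc zNorm d (x - y) ≤ ρ * r := hy
      _ = ρ / δ * (δ * r) := by field_simp
      _ ≤ ρ / δ * zNorm d (x - φ y) := by gcongr

lemma card_erase_zBall_le (hβ : 0 < β) (hκ₁ : 0 < κ₁) (hκ₂ : 0 < κ₂)
    (hC : ∀ w, x ≠ w → C x w ≤ κ₁ * zNorm d (x - w) ^ (-β))
    (hφ : ∀ y, x ≠ y → κ₂ * zNorm d (x - y) ^ (-β) ≤ C x (φ y))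
    (hfib : ∀ s : Finset (Fin d → ℤ), x ∉ s → ∀ ξ, (s.filter fun y => φ y = ξ).card ≤ N)
    (hρ : 0 < ρ) (hρκ : (κ₁ / κ₂) ^ β⁻¹ * ρ ≤ 1) (hδ : 0 < δ) :
    ((zBall d x (ρ * r)).erase x).card ≤
      N * ((zBall d x (δ * r)).card + (strongNeighbours d C (κ₂ * (ρ / δ) ^ (-β)) β x r).card) :=
  card_le_mul_card_add_card_of_mapsTo
    (fun _ hy => mem_union.2 <| or_iff_not_imp_left.2 <|
      mem_strongNeighbours_of_notMem_zBall hβ hκ₁ hκ₂ hC hφ hρ hρκ hδ hy)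
    (hfib _ (notMem_erase x _))

lemma card_zBall_le_card_strongNeighbours (hd : 1 ≤ d) (hN : 0 < N) {c : ℝ} (hβ : 0 < β)
    (hκ₁ : 0 < κ₁) (hκ₂ : 0 < κ₂) (hC : ∀ w, x ≠ w → C x w ≤ κ₁ * zNorm d (x - w) ^ (-β))
    (hφ : ∀ y, x ≠ y → κ₂ * zNorm d (x - y) ^ (-β) ≤ C x (φ y))
    (hfib : ∀ s : Finset (Fin d → ℤ), x ∉ s → ∀ ξ, (s.filter fun y => φ y = ξ).card ≤ N)
    (hc : 0 < c) (hc1 : c ≤ 1) (hcκ : (κ₁ / κ₂) ^ β⁻¹ * (c * √d) ≤ 1) (hr : 12 * N / c < r) :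
    (c / 3) ^ d / (4 * N) * (zBall d x r).card ≤
      (strongNeighbours d C (κ₂ * (12 * N * √d) ^ (-β)) β x r).card := by
  have hsqrt : 0 < √(d : ℝ) := Real.sqrt_pos.2 (by exact_mod_cast hd)
  have hr0 : 0 < r := (by positivity : 0 < 12 * N / c).trans hr
  have hcount := card_erase_zBall_le (ρ := c * √d) (δ := c / (12 * N)) (r := r) hβ hκ₁ hκ₂ hC hφ
    hfib (by positivity) hcκ (by positivity)
  rw [show c * √d / (c / (12 * N)) = 12 * N * √d by field_simp] at hcount
  have hA : (c * r) ^ d ≤ (((zBall d x (c * √d * r)).erase x).card : ℝ) + 1 := by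
    rw [← Nat.cast_add_one, card_erase_add_one (mem_zBall.2 (by simp [zNorm]; positivity))]
    calc (c * r) ^ d = (c * √d * r / √d) ^ d := by field_simp
      _ ≤ (zBall d x (c * √d * r)).card := le_card_zBall x (by positivity)
  exact le_of_lattice_counts hd hN hc hc1 hr hA (card_zBall_le (R := c / (12 * N) * r) x
    (by positivity)) (card_zBall_le x hr0.le) (by exact_mod_cast hcount)

end FirstStep

theorem stmt1 (d : ℕ) (hd : 1 ≤ d) (α : ℝ) (hα : α ∈ Set.Ioo (0:ℝ) 2)
    (κ₁ κ₂ : ℝ) (hκ₁ : 0 < κ₁) (hκ₂ : 0 < κ₂) (N₀ : ℕ) :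
    -- the constants γ, Θ₁, κ₃ depend only on κ₁, κ₂, N₀, d and α
    ∃ γ ∈ Set.Ioo (0:ℝ) 1, ∃ Θ₁ > (0:ℝ), ∃ κ₃ > (0:ℝ),
      ∀ (C : (Fin d → ℤ) → (Fin d → ℤ) → ℝ),
        (∀ x y, 0 ≤ C x y) →
        -- (A2)
        (∀ x y, x ≠ y → C x y ≤ κ₁ * zNorm d (x - y) ^ (-((d:ℝ) + α))) →
        -- (A3): chains of length `l x y ≤ N₀` given by `z x y`
        ∀ (l : (Fin d → ℤ) → (Fin d → ℤ) → ℕ)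
          (z : (Fin d → ℤ) → (Fin d → ℤ) → ℕ → (Fin d → ℤ)),
          (∀ x y, x ≠ y → l x y ≤ N₀ ∧ z x y 0 = x ∧ z x y (l x y) = y ∧
            ∀ i < l x y,
              κ₂ * zNorm d (x - y) ^ (-((d:ℝ) + α)) ≤ C (z x y i) (z x y (i+1))) →
          (∀ ζ ξ : Fin d → ℤ,
            {p : (Fin d → ℤ) × (Fin d → ℤ) | p.1 ≠ p.2 ∧
              ∃ k < l p.1 p.2, z p.1 p.2 k = ζ ∧ z p.1 p.2 (k+1) = ξ}.Finite ∧
            {p : (Fin d → ℤ) × (Fin d → ℤ) | p.1 ≠ p.2 ∧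
              ∃ k < l p.1 p.2, z p.1 p.2 k = ζ ∧ z p.1 p.2 (k+1) = ξ}.ncard ≤ N₀) →
          -- conclusion
          ∀ (x : Fin d → ℤ) (r : ℝ), Θ₁ < r →
            γ * (({y : Fin d → ℤ | zNorm d (y - x) ≤ r}.ncard : ℝ)) ≤
              (({y : Fin d → ℤ | zNorm d (y - x) ≤ r ∧
                κ₃ * zNorm d (x - y) ^ (-((d:ℝ) + α)) ≤ C x y}.ncard : ℝ)) := by
  obtain ⟨hα, -⟩ := hα
  set β : ℝ := (d : ℝ) + α
  set N : ℕ := N₀ + 1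
  set c : ℝ := (√d * (1 + (κ₁ / κ₂) ^ β⁻¹))⁻¹
  have hβ : 0 < β := by positivity
  have hsqrt : 1 ≤ √(d : ℝ) := Real.one_le_sqrt.2 (by exact_mod_cast hd)
  have hc1 : c ≤ 1 := inv_le_one_of_one_le₀ <|
    one_le_mul_of_one_le_of_one_le hsqrt (by linarith [(by positivity : 0 ≤ (κ₁ / κ₂) ^ β⁻¹)])
  have hcκ : (κ₁ / κ₂) ^ β⁻¹ * (c * √d) ≤ 1 := by
    rw [mul_comm c, ← mul_assoc, ← div_eq_mul_inv, div_le_one (by positivity)]; nlinarith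
  refine ⟨(c / 3) ^ d / (4 * N), ⟨by positivity, ?_⟩, 12 * N / c, by positivity,
    κ₂ * (12 * N * √d) ^ (-β), by positivity, ?_⟩
  · rw [div_lt_one (by positivity)]
    linarith [pow_le_one₀ (n := d) (by positivity : 0 ≤ c / 3) (by linarith),
      (Nat.one_le_cast (α := ℝ)).2 N₀.succ_pos]
  intro C _ hC l z hchain hmult x r hr
  rw [← coe_zBall, ← coe_strongNeighbours, Set.ncard_coe_finset, Set.ncard_coe_finset]
  refine card_zBall_le_card_strongNeighbours (φ := fun y => z x y 1) hd N₀.succ_pos hβ hκ₁ hκ₂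
    (hC x) (fun y hxy => ?_) (fun s hs ξ => ?_) (by positivity) hc1 hcκ hr
  · exact le_conductance_chain_first_step hxy (hchain x y hxy).2.1 (hchain x y hxy).2.2.1
      (hchain x y hxy).2.2.2
  · exact (card_filter_chain_first_step_eq_le (fun y hxy => ⟨(hchain x y hxy).2.1,
      (hchain x y hxy).2.2.1⟩) ξ (hmult x ξ).1 (hmult x ξ).2 s hs).trans N₀.le_succ
end

section
/- Let γ > 0 and let V = {(x₁,x₂) ∈ ℤ² : |x₂| ≤ γ|x₁|}. For x = (x₁,x₂) and y = (y₁,y₂) in ℤ² with x ≠ y, set z = (x₁ + ⌊(2 + γ^{-1})|x−y|⌋, x₂), where |·| is the Euclidean norm and ⌊·⌋ the floor function. Then x − z ∈ V, z − y ∈ V, |x − z| ≤ (3 + γ^{-1})|x−y|, and |z − y| ≤ 2(4 + γ^{-1})|x−y|. -/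
/-- Euclidean norm of a point of `ℤ²`. -/
noncomputable def znrm (w : ℤ × ℤ) : ℝ := Real.sqrt (((w.1 : ℝ))^2 + ((w.2 : ℝ))^2)

/-- The double cone `V = {(x₁,x₂) ∈ ℤ² : |x₂| ≤ γ|x₁|}`. -/
def inCone (γ : ℝ) (w : ℤ × ℤ) : Prop := |((w.2 : ℤ) : ℝ)| ≤ γ * |((w.1 : ℤ) : ℝ)|

lemma sqrt_sq_add_sq_le (a b : ℝ) : Real.sqrt (a^2 + b^2) ≤ |a| + |b| := by
  rw [show |a| + |b| = Real.sqrt ((|a| + |b|)^2) from (Real.sqrt_sq (by positivity)).symm]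
  apply Real.sqrt_le_sqrt
  nlinarith [sq_abs a, sq_abs b, mul_nonneg (abs_nonneg a) (abs_nonneg b)]

lemma abs_le_sqrt_sq_add_sq_left (a b : ℝ) : |a| ≤ Real.sqrt (a^2 + b^2) := by
  rw [← Real.sqrt_sq_eq_abs]
  exact Real.sqrt_le_sqrt (by nlinarith)

lemma abs_le_sqrt_sq_add_sq_right (a b : ℝ) : |b| ≤ Real.sqrt (a^2 + b^2) := by
  rw [← Real.sqrt_sq_eq_abs]
  exact Real.sqrt_le_sqrt (by nlinarith)

theorem stmt13 (γ : ℝ) (hγ : 0 < γ) (x y : ℤ × ℤ) (hxy : x ≠ y) (z : ℤ × ℤ)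
    (hz : z = (x.1 + ⌊(2 + γ⁻¹) * znrm (x - y)⌋, x.2)) :
    inCone γ (x - z) ∧ inCone γ (z - y) ∧
      znrm (x - z) ≤ (3 + γ⁻¹) * znrm (x - y) ∧
      znrm (z - y) ≤ 2 * (4 + γ⁻¹) * znrm (x - y) := by
  have hγi : 0 < γ⁻¹ := inv_pos.mpr hγ
  set d : ℝ := znrm (x - y) with hdd
  -- d ≥ 1
  have hd1 : (1 : ℝ) ≤ d := by
    have hne : x - y ≠ 0 := sub_ne_zero.mpr hxy
    have h1 : (1 : ℝ) ≤ (((x - y).1 : ℝ))^2 + (((x - y).2 : ℝ))^2 := by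
      rcases (by
        by_contra h
        push_neg at h
        exact hne (Prod.ext h.1 h.2) : (x - y).1 ≠ 0 ∨ (x - y).2 ≠ 0) with h | h
      · have := Int.one_le_abs h
        have h2 : (1 : ℝ) ≤ |(((x - y).1 : ℤ) : ℝ)| := by
          rw [← Int.cast_abs]; exact_mod_cast this
        nlinarith [sq_abs (((x - y).1 : ℤ) : ℝ), sq_nonneg (((x - y).2 : ℤ) : ℝ)]
      · have := Int.one_le_abs h
        have h2 : (1 : ℝ) ≤ |(((x - y).2 : ℤ) : ℝ)| := by
          rw [← Int.cast_abs]; exact_mod_cast this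
        nlinarith [sq_abs (((x - y).2 : ℤ) : ℝ), sq_nonneg (((x - y).1 : ℤ) : ℝ)]
    calc (1 : ℝ) = Real.sqrt 1 := Real.sqrt_one.symm
      _ ≤ d := Real.sqrt_le_sqrt h1
  have hd0 : (0 : ℝ) < d := lt_of_lt_of_le one_pos hd1
  set k : ℤ := ⌊(2 + γ⁻¹) * d⌋ with hk
  have hk_le : (k : ℝ) ≤ (2 + γ⁻¹) * d := Int.floor_le _
  have hk_gt : (2 + γ⁻¹) * d - 1 < (k : ℝ) := Int.sub_one_lt_floor _
  have hk_lb : (1 + γ⁻¹) * d ≤ (k : ℝ) := by nlinarith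
  have hk_pos : (0 : ℝ) < (k : ℝ) := by nlinarith
  -- coordinate bounds
  have hfst : |((x.1 : ℝ) - (y.1 : ℝ))| ≤ d := by
    have := abs_le_sqrt_sq_add_sq_left (((x - y).1 : ℤ) : ℝ) (((x - y).2 : ℤ) : ℝ)
    rw [hdd]; unfold znrm
    convert this using 3 <;> push_cast [Prod.fst_sub] <;> ring
  have hsnd : |((x.2 : ℝ) - (y.2 : ℝ))| ≤ d := by
    have := abs_le_sqrt_sq_add_sq_right (((x - y).1 : ℤ) : ℝ) (((x - y).2 : ℤ) : ℝ)
    rw [hdd]; unfold znrm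
    convert this using 3 <;> push_cast [Prod.snd_sub] <;> ring
  have hfst' := abs_le.mp hfst
  have hsnd' := abs_le.mp hsnd
  subst hz
  refine ⟨?_, ?_, ?_, ?_⟩
  · show |(((x - (x.1 + k, x.2)).2 : ℤ) : ℝ)| ≤ γ * |(((x - (x.1 + k, x.2)).1 : ℤ) : ℝ)|
    simp only [Prod.snd_sub, Prod.fst_sub]
    simp only [sub_self]
    push_cast
    simp only [abs_zero]
    positivity
  · show |((((x.1 + k, x.2) - y).2 : ℤ) : ℝ)| ≤ γ * |((((x.1 + k, x.2) - y).1 : ℤ) : ℝ)|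
    simp only [Prod.snd_sub, Prod.fst_sub]
    push_cast
    have hγγ : γ * γ⁻¹ = 1 := mul_inv_cancel₀ hγ.ne'
    have hpos : γ⁻¹ * |((x.2 : ℝ) - (y.2 : ℝ))| ≤ (x.1 : ℝ) + (k : ℝ) - (y.1 : ℝ) := by
      have h1 : γ⁻¹ * |((x.2 : ℝ) - (y.2 : ℝ))| ≤ γ⁻¹ * d :=
        mul_le_mul_of_nonneg_left hsnd (le_of_lt hγi)
      nlinarith
    have habs : |((x.1 : ℝ) + (k : ℝ) - (y.1 : ℝ))| = (x.1 : ℝ) + (k : ℝ) - (y.1 : ℝ) := by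
      rw [abs_of_nonneg]
      have : (0:ℝ) ≤ γ⁻¹ * |((x.2 : ℝ) - (y.2 : ℝ))| := by positivity
      linarith
    rw [habs]
    calc |((x.2 : ℝ) - (y.2 : ℝ))| = γ * (γ⁻¹ * |((x.2 : ℝ) - (y.2 : ℝ))|) := by
          rw [← mul_assoc, hγγ, one_mul]
      _ ≤ γ * ((x.1 : ℝ) + (k : ℝ) - (y.1 : ℝ)) := mul_le_mul_of_nonneg_left hpos (le_of_lt hγ)
  · have heq : znrm (x - (x.1 + k, x.2)) = (k : ℝ) := by
      unfold znrm
      simp only [Prod.fst_sub, Prod.snd_sub, sub_self]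
      push_cast
      rw [show ((x.1:ℝ) - ((x.1:ℝ) + (k:ℝ)))^2 + (0:ℝ)^2 = (k:ℝ)^2 by ring]
      rw [Real.sqrt_sq hk_pos.le]
    rw [heq]
    nlinarith
  · have hle : znrm ((x.1 + k, x.2) - y) ≤
        |((x.1 : ℝ) + (k : ℝ) - (y.1 : ℝ))| + |((x.2 : ℝ) - (y.2 : ℝ))| := by
      unfold znrm
      simp only [Prod.fst_sub, Prod.snd_sub]
      push_cast
      exact sqrt_sq_add_sq_le _ _

    have h1 : |((x.1 : ℝ) + (k : ℝ) - (y.1 : ℝ))| ≤ (k : ℝ) + d := by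
      rw [abs_le]; constructor <;> nlinarith
    nlinarith [abs_nonneg ((x.2 : ℝ) - (y.2 : ℝ))]
end
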